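/- arXiv:1011.1699 — 2 statements merged into one kernel-verified Lean document; each statement's English description precedes it below -/
import Mathlib

section
/- (Equilibrium states concentrate on minimizing measures) Let f : X → ℝ be continuous, let β_n → +∞ be a sequence of positive reals, and for each n let μ_n ∈ 𝔐 be an equilibrium state for the potential −β_n a + f, i.e. h(μ_n) + ∫_X (−β_n a + f) dμ_n = P(−β_n a + f), where P(g) := sup_{μ∈𝔐} ( h(μ) + ∫_X g dμ ). Then ∫_X a dμ_n → 0 as n → ∞, and every weak limit point μ_∞ of the sequence (μ_n) is an invariant minimizing measure: μ_∞ ∈ 𝔐₀. -/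
/-!
Comparing the equilibrium state `μₙ` of `-βₙ a + f` with a minimizing measure `μ₀` in the
variational principle gives `βₙ ∫ a dμₙ ≤ (h μₙ - h μ₀) + (∫ f dμₙ - ∫ f dμ₀) ≤ 2C + 2‖f‖`, so
`∫ a dμₙ → 0`. A weak limit point is invariant because `𝔐` is closed, and minimizing because
`μ ↦ ∫ a dμ` is weakly continuous.
-/

open MeasureTheory Filter Topology Set

noncomputable section

/-- A continuous flow on `X`. -/
def IsFlow {X : Type*} [TopologicalSpace X] (Φ : ℝ → X → X) : Prop :=
  Continuous (fun p : ℝ × X => Φ p.1 p.2) ∧ Φ 0 = id ∧ ∀ t s : ℝ, Φ (t + s) = Φ t ∘ Φ s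

/-- The set of flow-invariant Borel probability measures. -/
def Minv {X : Type*} [TopologicalSpace X] [MeasurableSpace X] (Φ : ℝ → X → X) :
    Set (ProbabilityMeasure X) :=
  {μ | ∀ t : ℝ, (μ : Measure X).map (Φ t) = (μ : Measure X)}

/-- The topological support of a measure. -/
def msupport {X : Type*} [TopologicalSpace X] [MeasurableSpace X] (μ : Measure X) : Set X :=
  {x | ∀ U : Set X, IsOpen U → x ∈ U → 0 < μ U}

/-- The undamped set `K`: the closure of the union of the supports of all
minimizing invariant measures. -/
def Kset {X : Type*} [TopologicalSpace X] [MeasurableSpace X] (Φ : ℝ → X → X) (a : X → ℝ) :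
    Set X :=
  closure (⋃ μ ∈ {μ ∈ Minv Φ | ∫ x, a x ∂(μ : Measure X) = 0}, msupport (μ : Measure X))

/-- Abstract pressure: `P(g) = sup over invariant measures of h(μ) + ∫ g dμ`. -/
def Pres {X : Type*} [TopologicalSpace X] [MeasurableSpace X] (Φ : ℝ → X → X)
    (h : ProbabilityMeasure X → ℝ) (g : X → ℝ) : ℝ :=
  sSup {r : ℝ | ∃ μ ∈ Minv Φ, r = h μ + ∫ x, g x ∂(μ : Measure X)}

/-- Abstract pressure on `K`: sup over invariant measures with `μ(K) = 1`. -/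
def PresK {X : Type*} [TopologicalSpace X] [MeasurableSpace X] (Φ : ℝ → X → X) (a : X → ℝ)
    (h : ProbabilityMeasure X → ℝ) (f : X → ℝ) : ℝ :=
  sSup {r : ℝ | ∃ μ ∈ Minv Φ,
    (μ : Measure X) (Kset Φ a) = 1 ∧ r = h μ + ∫ x, f x ∂(μ : Measure X)}

theorem IsFlow.continuous_apply {X : Type*} [TopologicalSpace X] {Φ : ℝ → X → X}
    (hΦ : IsFlow Φ) (t : ℝ) : Continuous (Φ t) :=
  hΦ.1.comp (continuous_const.prodMk continuous_id)

theorem MapClusterPt.eq_of_tendsto_comp {α X Y : Type*} [TopologicalSpace X] [TopologicalSpace Y]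
    [T2Space Y] {l : Filter α} {u : α → X} {x : X} {F : X → Y} {y : Y}
    (hx : MapClusterPt x l u) (hF : ContinuousAt F x) (hu : Tendsto (F ∘ u) l (𝓝 y)) :
    F x = y :=
  eq_of_nhds_neBot ((hx.continuousAt_comp hF).clusterPt.mono hu)

theorem tendsto_zero_of_mul_le_of_tendsto_atTop {ι : Type*} {l : Filter ι} {u β : ι → ℝ}
    {M : ℝ} (hu : ∀ i, 0 ≤ u i) (hβu : ∀ i, β i * u i ≤ M) (hβ : Tendsto β l atTop) :
    Tendsto u l (𝓝 0) := by
  refine squeeze_zero' (Eventually.of_forall hu) ?_ ((tendsto_const_nhds (x := M)).div_atTop hβ)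
  filter_upwards [hβ.eventually_gt_atTop 0] with i hi
  rw [le_div_iff₀ hi, mul_comm]
  exact hβu i

section CompactSpace

variable {X : Type*} [TopologicalSpace X] [CompactSpace X] [MeasurableSpace X]
  [OpensMeasurableSpace X]

theorem abs_integral_le_norm_mkOfCompact {g : X → ℝ} (hg : Continuous g)
    (μ : ProbabilityMeasure X) :
    |∫ x, g x ∂(μ : Measure X)| ≤ ‖BoundedContinuousFunction.mkOfCompact ⟨g, hg⟩‖ :=
  BoundedContinuousFunction.norm_integral_le_norm (μ : Measure X) (.mkOfCompact ⟨g, hg⟩)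

theorem continuous_integral_of_continuous {g : X → ℝ} (hg : Continuous g) :
    Continuous fun μ : ProbabilityMeasure X => ∫ x, g x ∂(μ : Measure X) :=
  ProbabilityMeasure.continuous_integral_boundedContinuousFunction (.mkOfCompact ⟨g, hg⟩)

theorem integral_neg_mul_add {g f : X → ℝ} (hg : Continuous g) (hf : Continuous f) (b : ℝ)
    (μ : ProbabilityMeasure X) :
    ∫ x, (-b * g x + f x) ∂(μ : Measure X) =
      -b * ∫ x, g x ∂(μ : Measure X) + ∫ x, f x ∂(μ : Measure X) := by
  have integrable {k : X → ℝ} (hk : Continuous k) : Integrable k (μ : Measure X) :=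
    hk.integrable_of_hasCompactSupport (HasCompactSupport.of_compactSpace k)
  rw [integral_add ((integrable hg).const_mul _) (integrable hf), integral_const_mul]

theorem le_Pres {Φ : ℝ → X → X} {h : ProbabilityMeasure X → ℝ} {C : ℝ}
    (hC : ∀ μ ∈ Minv Φ, h μ ≤ C) {g : X → ℝ} (hg : Continuous g) {μ : ProbabilityMeasure X}
    (hμ : μ ∈ Minv Φ) : h μ + ∫ x, g x ∂(μ : Measure X) ≤ Pres Φ h g := by
  refine le_csSup ⟨C + ‖BoundedContinuousFunction.mkOfCompact ⟨g, hg⟩‖, ?_⟩ ⟨μ, hμ, rfl⟩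
  rintro r ⟨ν, hν, rfl⟩
  exact add_le_add (hC ν hν) ((le_abs_self _).trans (abs_integral_le_norm_mkOfCompact hg ν))

theorem mul_integral_le_of_eq_Pres {Φ : ℝ → X → X} {h : ProbabilityMeasure X → ℝ} {C : ℝ}
    (hC : ∀ μ ∈ Minv Φ, h μ ≤ C) {a f : X → ℝ} (ha : Continuous a) (hf : Continuous f)
    {μ₀ : ProbabilityMeasure X} (hμ₀ : μ₀ ∈ Minv Φ) (hμ₀a : ∫ x, a x ∂(μ₀ : Measure X) = 0)
    {b : ℝ} {μ : ProbabilityMeasure X}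
    (hμ : h μ + ∫ x, (-b * a x + f x) ∂(μ : Measure X) = Pres Φ h (fun x => -b * a x + f x)) :
    b * ∫ x, a x ∂(μ : Measure X) ≤
      (h μ - h μ₀) + (∫ x, f x ∂(μ : Measure X) - ∫ x, f x ∂(μ₀ : Measure X)) := by
  have hle := le_Pres hC (g := fun x => -b * a x + f x) (by fun_prop) hμ₀
  rw [← hμ, integral_neg_mul_add ha hf, integral_neg_mul_add ha hf, hμ₀a] at hle
  linarith

end CompactSpace

theorem isClosed_Minv {X : Type*} [TopologicalSpace X] [HasOuterApproxClosed X]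
    [MeasurableSpace X] [BorelSpace X] {Φ : ℝ → X → X} (hΦ : ∀ t, Continuous (Φ t)) :
    IsClosed (Minv Φ) := by
  have hMinv : Minv Φ = ⋂ t, {μ : ProbabilityMeasure X |
      μ.map (hΦ t).measurable.aemeasurable = μ} := by
    ext μ
    simp only [Minv, mem_ofPred_eq, mem_iInter, ← ProbabilityMeasure.toMeasure_injective.eq_iff,
      ProbabilityMeasure.toMeasure_map]
  rw [hMinv]
  exact isClosed_iInter fun t =>
    isClosed_eq (ProbabilityMeasure.continuous_map (hΦ t)) continuous_id

theorem stmt7_general {X : Type*} [MetricSpace X] [CompactSpace X] [MeasurableSpace X] [BorelSpace X]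
    (Φ : ℝ → X → X) (hΦ : IsFlow Φ)
    (a : X → ℝ) (ha : Continuous a) (ha0 : ∀ x, 0 ≤ a x)
    (hmin : ∃ μ ∈ Minv Φ, ∫ x, a x ∂(μ : Measure X) = 0)
    (h : ProbabilityMeasure X → ℝ)
    (hbd : ∃ C : ℝ, ∀ μ ∈ Minv Φ, |h μ| ≤ C)
    (f : X → ℝ) (hf : Continuous f)
    (β : ℕ → ℝ) (hβ : Tendsto β atTop atTop)
    (μn : ℕ → ProbabilityMeasure X) (hμn : ∀ n, μn n ∈ Minv Φ)
    (heq : ∀ n, h (μn n) + ∫ x, (-β n * a x + f x) ∂(μn n : Measure X) =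
      Pres Φ h (fun x => -β n * a x + f x)) :
    Tendsto (fun n => ∫ x, a x ∂(μn n : Measure X)) atTop (𝓝 0) ∧
    ∀ μlim : ProbabilityMeasure X, MapClusterPt μlim atTop μn →
      μlim ∈ Minv Φ ∧ ∫ x, a x ∂(μlim : Measure X) = 0 := by
  obtain ⟨μ₀, hμ₀, hμ₀a⟩ := hmin
  obtain ⟨C, hC⟩ := hbd
  have penalty (n : ℕ) : β n * ∫ x, a x ∂(μn n : Measure X) ≤
      2 * C + 2 * ‖BoundedContinuousFunction.mkOfCompact ⟨f, hf⟩‖ := by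
    have hhn := abs_le.1 (hC _ (hμn n))
    have hh₀ := abs_le.1 (hC _ hμ₀)
    have hfn := abs_le.1 (abs_integral_le_norm_mkOfCompact hf (μn n))
    have hf₀ := abs_le.1 (abs_integral_le_norm_mkOfCompact hf μ₀)
    linarith [mul_integral_le_of_eq_Pres (fun μ hμ => (abs_le.1 (hC μ hμ)).2) ha hf hμ₀ hμ₀a
      (heq n)]
  have hlim := tendsto_zero_of_mul_le_of_tendsto_atTop (fun n => integral_nonneg ha0) penalty hβ
  refine ⟨hlim, fun μlim hcl => ⟨?_, ?_⟩⟩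
  · exact (isClosed_Minv hΦ.continuous_apply).mem_of_mapClusterPt hcl (Eventually.of_forall hμn)
  · exact hcl.eq_of_tendsto_comp (continuous_integral_of_continuous ha).continuousAt hlim

/-- Equilibrium states concentrate on minimizing measures as the damping
strength `βₙ` tends to infinity. -/
theorem stmt7 {X : Type*} [MetricSpace X] [CompactSpace X] [MeasurableSpace X] [BorelSpace X]
    (Φ : ℝ → X → X) (hΦ : IsFlow Φ)
    (a : X → ℝ) (ha : Continuous a) (ha0 : ∀ x, 0 ≤ a x)
    (hmin : ∃ μ ∈ Minv Φ, ∫ x, a x ∂(μ : Measure X) = 0)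
    (h : ProbabilityMeasure X → ℝ)
    (hbd : ∃ C : ℝ, ∀ μ ∈ Minv Φ, |h μ| ≤ C)
    (husc : UpperSemicontinuousOn h (Minv Φ))
    (f : X → ℝ) (hf : Continuous f)
    (β : ℕ → ℝ) (hβpos : ∀ n, 0 < β n) (hβ : Tendsto β atTop atTop)
    (μn : ℕ → ProbabilityMeasure X) (hμn : ∀ n, μn n ∈ Minv Φ)
    (heq : ∀ n, h (μn n) + ∫ x, (-β n * a x + f x) ∂(μn n : Measure X) =
      Pres Φ h (fun x => -β n * a x + f x)) :
    Tendsto (fun n => ∫ x, a x ∂(μn n : Measure X)) atTop (𝓝 0) ∧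
    ∀ μlim : ProbabilityMeasure X, MapClusterPt μlim atTop μn →
      μlim ∈ Minv Φ ∧ ∫ x, a x ∂(μlim : Measure X) = 0 :=
  stmt7_general Φ hΦ a ha ha0 hmin h hbd f hf β hβ μn hμn heq
end
end

section
/- (K is null for ergodic measures not minimizing; in particular K has zero Liouville measure) Let ν ∈ 𝔐 be ergodic for the flow, meaning that every Borel set s ⊆ X with (Φ^t)⁻¹(s) = s for all t ∈ ℝ satisfies ν(s) = 0 or ν(s) = 1. If ∫_X a dν > 0, then ν(K) = 0. -/
/-!
Every minimizing measure is invariant and integrates `a ≥ 0` to zero along each time-`t` map,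
so its support lies in the closed, flow-invariant set `Z` of points whose whole orbit sits in
`{a = 0}`; hence `K ⊆ Z`. By ergodicity `ν Z` is `0` or `1`, and `ν Z = 1` would force
`∫ a dν = 0`.
-/

open MeasureTheory Filter Topology Set

noncomputable section

theorem eq_on_msupport_of_ae_eq {X Y : Type*} [TopologicalSpace X] [MeasurableSpace X]
    [TopologicalSpace Y] [T2Space Y] {μ : Measure X} {f g : X → Y}
    (hf : Continuous f) (hg : Continuous g) (hfg : f =ᵐ[μ] g) {x : X} (hx : x ∈ msupport μ) :
    f x = g x := by
  by_contra hne
  have hpos : 0 < μ {y | f y ≠ g y} := hx _ (isOpen_ne_fun hf hg) hne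
  exact hpos.ne' (ae_iff.mp hfg)

namespace IsFlow

variable {X : Type*} [TopologicalSpace X] {Φ : ℝ → X → X}

theorem continuous_apply_s12 (hΦ : IsFlow Φ) (t : ℝ) : Continuous (Φ t) :=
  hΦ.1.comp (continuous_const.prodMk continuous_id)

end IsFlow

def zeroOrbitSet {X : Type*} (Φ : ℝ → X → X) (a : X → ℝ) : Set X :=
  {x | ∀ t : ℝ, a (Φ t x) = 0}

section zeroOrbitSet

variable {X : Type*} {Φ : ℝ → X → X} {a : X → ℝ}

theorem zeroOrbitSet_subset_setOf_eq_zero (hΦ0 : Φ 0 = id) :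
    zeroOrbitSet Φ a ⊆ {x | a x = 0} := by
  intro x hx
  simpa [hΦ0] using hx 0

theorem preimage_zeroOrbitSet (hΦadd : ∀ t s : ℝ, Φ (t + s) = Φ t ∘ Φ s) (t : ℝ) :
    Φ t ⁻¹' zeroOrbitSet Φ a = zeroOrbitSet Φ a := by
  ext x
  refine ⟨fun hx s => ?_, fun hx s => by simpa [hΦadd] using hx (s + t)⟩
  have hs : Φ (s - t) (Φ t x) = Φ s x := by simpa using (congrFun (hΦadd (s - t) t) x).symm
  simpa [hs] using hx (s - t)

variable [TopologicalSpace X]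

theorem isClosed_zeroOrbitSet (hΦ : IsFlow Φ) (ha : Continuous a) :
    IsClosed (zeroOrbitSet Φ a) := by
  simp only [zeroOrbitSet, ofPred_forall]
  exact isClosed_iInter fun t => isClosed_eq (ha.comp (hΦ.continuous_apply_s12 t)) continuous_const

variable [MeasurableSpace X] [BorelSpace X]

theorem msupport_subset_zeroOrbitSet [CompactSpace X] (hΦ : IsFlow Φ)
    (ha : Continuous a) (ha0 : ∀ x, 0 ≤ a x) {μ : ProbabilityMeasure X} (hμ : μ ∈ Minv Φ)
    (hμa : ∫ x, a x ∂(μ : Measure X) = 0) :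
    msupport (μ : Measure X) ⊆ zeroOrbitSet Φ a := by
  intro x hx t
  have hat : Continuous fun y => a (Φ t y) := ha.comp (hΦ.continuous_apply_s12 t)
  have hint : ∫ y, a (Φ t y) ∂(μ : Measure X) = 0 := by
    rw [← integral_map (hΦ.continuous_apply_s12 t).aemeasurable ha.aestronglyMeasurable, hμ t, hμa]
  have hae := (integral_eq_zero_iff_of_nonneg (fun y => ha0 _)
    (hat.integrable_of_hasCompactSupport (HasCompactSupport.of_compactSpace _))).mp hint
  exact eq_on_msupport_of_ae_eq hat continuous_const hae hx

theorem Kset_subset_zeroOrbitSet [CompactSpace X] (hΦ : IsFlow Φ) (ha : Continuous a)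
    (ha0 : ∀ x, 0 ≤ a x) : Kset Φ a ⊆ zeroOrbitSet Φ a := by
  refine closure_minimal ?_ (isClosed_zeroOrbitSet hΦ ha)
  simp only [iUnion_subset_iff]
  exact fun μ hμ => msupport_subset_zeroOrbitSet hΦ ha ha0 hμ.1 hμ.2

end zeroOrbitSet

theorem stmt12_general {X : Type*} [MetricSpace X] [CompactSpace X] [MeasurableSpace X] [BorelSpace X]
    (Φ : ℝ → X → X) (hΦ : IsFlow Φ)
    (a : X → ℝ) (ha : Continuous a) (ha0 : ∀ x, 0 ≤ a x)
    (ν : ProbabilityMeasure X)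
    (herg : ∀ s : Set X, MeasurableSet s → (∀ t : ℝ, Φ t ⁻¹' s = s) →
      (ν : Measure X) s = 0 ∨ (ν : Measure X) s = 1)
    (hpos : 0 < ∫ x, a x ∂(ν : Measure X)) :
    (ν : Measure X) (Kset Φ a) = 0 := by
  have hZ := (isClosed_zeroOrbitSet hΦ ha).measurableSet
  rcases herg _ hZ (preimage_zeroOrbitSet hΦ.2.2) with hnull | hfull
  · exact measure_mono_null (Kset_subset_zeroOrbitSet hΦ ha ha0) hnull
  · have hae : ∀ᵐ x ∂(ν : Measure X), x ∈ zeroOrbitSet Φ a :=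
      (ae_iff_measure_eq hZ.nullMeasurableSet).mpr (hfull.trans measure_univ.symm)
    have hνa : ∫ x, a x ∂(ν : Measure X) = 0 :=
      integral_eq_zero_of_ae (hae.mono fun _ hx => zeroOrbitSet_subset_setOf_eq_zero hΦ.2.1 hx)
    exact absurd hνa hpos.ne'

/-- `K` is null for every ergodic invariant measure which is not minimizing. -/
theorem stmt12 {X : Type*} [MetricSpace X] [CompactSpace X] [MeasurableSpace X] [BorelSpace X]
    (Φ : ℝ → X → X) (hΦ : IsFlow Φ)
    (a : X → ℝ) (ha : Continuous a) (ha0 : ∀ x, 0 ≤ a x)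
    (hmin : ∃ μ ∈ Minv Φ, ∫ x, a x ∂(μ : Measure X) = 0)
    (ν : ProbabilityMeasure X) (hν : ν ∈ Minv Φ)
    (herg : ∀ s : Set X, MeasurableSet s → (∀ t : ℝ, Φ t ⁻¹' s = s) →
      (ν : Measure X) s = 0 ∨ (ν : Measure X) s = 1)
    (hpos : 0 < ∫ x, a x ∂(ν : Measure X)) :
    (ν : Measure X) (Kset Φ a) = 0 :=
  stmt12_general Φ hΦ a ha ha0 ν herg hpos
end
end
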